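/- Fix an integer d ≥ 1, T > 0, and let Q be a d×d real matrix with Q_{ij} > 0 for all i ≠ j and Σ_{j=1}^d Q_{ij} = 0 for every i. Let ν ∈ 𝕄_T and let (ν_n) be a sequence in 𝕄_T, with kernels K and K_n respectively, such that for every i ∈ {1,…,d}, K_n(s,i) → K(s,i) as n → ∞ for Lebesgue-almost every s ∈ [0,T]. Then Ĩ_T(ν_n) → Ĩ_T(ν) as n → ∞. -/

import Mathlib

open MeasureTheory Filter Topology

/-- A kernel on `[0,T] × {1,…,d}`. -/
def IsMKernel (d : ℕ) (T : ℝ) (K : ℝ → Fin d → ℝ) : Prop :=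
  (∀ i : Fin d, Measurable fun s => K s i) ∧
    ∀ s ∈ Set.Icc (0:ℝ) T, (∀ i : Fin d, 0 ≤ K s i) ∧ ∑ i : Fin d, K s i = 1

/-- The Donsker–Varadhan type rate function
`Ĩ_T(ν) = ∫₀ᵀ sup_{u ∈ U} [ -∑_i ((Qu)_i / u_i) K_ν(s,i) ] ds`, expressed through the
kernel `K` of `ν` (here `U` is the set of componentwise strictly positive vectors). -/
noncomputable def Itilde (d : ℕ) (T : ℝ) (Q : Matrix (Fin d) (Fin d) ℝ)
    (K : ℝ → Fin d → ℝ) : ℝ :=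
  ∫ s in (0:ℝ)..T,
    ⨆ u : {u : Fin d → ℝ // ∀ i : Fin d, 0 < u i},
      -∑ i : Fin d, (Q.mulVec u.1 i / u.1 i) * K s i

/-!
The integrand `I(p) = sup_{u > 0} -∑ᵢ ((Qu)ᵢ/uᵢ) pᵢ` satisfies `0 ≤ I ≤ ∑ᵢ |Qᵢᵢ|` on the simplex,
so by dominated convergence it suffices that `I` is continuous on the simplex. Each objective
`p ↦ -∑ᵢ ((Qu)ᵢ/uᵢ) pᵢ` is Lipschitz with a constant proportional to `max u / min u`. An almost
optimal `u` cannot be small where `p` has mass (the off-diagonal entries of `Q` are positive),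
and since `Q 1 = 0`, replacing it by `u + t ∑ⱼ uⱼ` costs only `O(t)` while bounding
`max u / min u` by `1 + 1/t`. So `I` is, up to `ε`, a supremum of equi-Lipschitz functions.
-/

open Matrix Finset

section DonskerVaradhan

variable {ι : Type*} [Fintype ι] {Q : Matrix ι ι ℝ} {u p : ι → ℝ}

noncomputable def dvObjective (Q : Matrix ι ι ℝ) (u p : ι → ℝ) : ℝ :=
  -∑ i, (Q *ᵥ u) i / u i * p i

noncomputable def dvRate (Q : Matrix ι ι ℝ) (p : ι → ℝ) : ℝ :=
  ⨆ u : {u : ι → ℝ // ∀ i, 0 < u i}, dvObjective Q u.1 p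

instance : Nonempty {u : ι → ℝ // ∀ i, 0 < u i} := ⟨⟨fun _ => 1, fun _ => one_pos⟩⟩

lemma sum_mul_le_mulVec (hQ : ∀ i j, i ≠ j → 0 ≤ Q i j) (hu : ∀ j, 0 ≤ u j) {i : ι}
    {s : Finset ι} (hi : i ∈ s) : ∑ j ∈ s, Q i j * u j ≤ (Q *ᵥ u) i :=
  sum_le_sum_of_subset_of_nonneg (subset_univ s) fun j _ hj =>
    mul_nonneg (hQ i j fun h => hj (h ▸ hi)) (hu j)

lemma diag_le_mulVec_div (hQ : ∀ i j, i ≠ j → 0 ≤ Q i j) (hu : ∀ j, 0 < u j) (i : ι) :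
    Q i i ≤ (Q *ᵥ u) i / u i := by
  rw [le_div_iff₀ (hu i)]
  simpa using sum_mul_le_mulVec hQ (fun j => (hu j).le) (mem_singleton_self i)

lemma mulVec_add_const (hQ : ∀ i, ∑ j, Q i j = 0) (u : ι → ℝ) (c : ℝ) :
    Q *ᵥ (fun j => u j + c) = Q *ᵥ u := by
  ext i
  simp [mulVec, dotProduct, mul_add, sum_add_distrib, ← sum_mul, hQ]

lemma dvObjective_one (hQ : ∀ i, ∑ j, Q i j = 0) (p : ι → ℝ) :
    dvObjective Q (fun _ => 1) p = 0 := by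
  simp [dvObjective, mulVec, dotProduct, hQ]

lemma neg_abs_diag_le_mulVec_div_mul (hQ : ∀ i j, i ≠ j → 0 ≤ Q i j) (hu : ∀ j, 0 < u j)
    {i : ι} (hpi : p i ∈ Set.Icc 0 1) : -|Q i i| ≤ (Q *ᵥ u) i / u i * p i := by
  nlinarith [mul_le_mul_of_nonneg_right (diag_le_mulVec_div hQ hu i) hpi.1,
    mul_le_mul_of_nonneg_right (neg_abs_le (Q i i)) hpi.1,
    mul_nonneg (abs_nonneg (Q i i)) (sub_nonneg.2 hpi.2)]

lemma dvObjective_le (hQ : ∀ i j, i ≠ j → 0 ≤ Q i j) (hu : ∀ i, 0 < u i)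
    (hp : p ∈ stdSimplex ℝ ι) : dvObjective Q u p ≤ ∑ i, |Q i i| := by
  rw [dvObjective, ← sum_neg_distrib]
  exact sum_le_sum fun i _ =>
    neg_le.1 (neg_abs_diag_le_mulVec_div_mul hQ hu (mem_Icc_of_mem_stdSimplex hp i))

lemma bddAbove_dvObjective (hQ : ∀ i j, i ≠ j → 0 ≤ Q i j) (hp : p ∈ stdSimplex ℝ ι) :
    BddAbove (Set.range fun u : {u : ι → ℝ // ∀ i, 0 < u i} => dvObjective Q u.1 p) :=
  ⟨∑ i, |Q i i|, Set.forall_mem_range.2 fun u => dvObjective_le hQ u.2 hp⟩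

lemma dvRate_nonneg (hQ : ∀ i j, i ≠ j → 0 ≤ Q i j) (hQrow : ∀ i, ∑ j, Q i j = 0)
    (hp : p ∈ stdSimplex ℝ ι) : 0 ≤ dvRate Q p :=
  (dvObjective_one hQrow p).symm.le.trans <|
    le_ciSup (bddAbove_dvObjective hQ hp) ⟨fun _ => 1, fun _ => one_pos⟩

lemma dvRate_le (hQ : ∀ i j, i ≠ j → 0 ≤ Q i j) (hp : p ∈ stdSimplex ℝ ι) :
    dvRate Q p ≤ ∑ i, |Q i i| :=
  ciSup_le fun u => dvObjective_le hQ u.2 hp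

lemma abs_dvRate_le (hQ : ∀ i j, i ≠ j → 0 ≤ Q i j) (hQrow : ∀ i, ∑ j, Q i j = 0)
    (hp : p ∈ stdSimplex ℝ ι) : |dvRate Q p| ≤ ∑ i, |Q i i| :=
  (abs_of_nonneg (dvRate_nonneg hQ hQrow hp)).trans_le (dvRate_le hQ hp)

lemma abs_dvObjective_sub_le {R : ℝ} (hu : ∀ i, 0 < u i) (hR : ∀ i j, u j ≤ R * u i)
    (p q : ι → ℝ) :
    |dvObjective Q u p - dvObjective Q u q| ≤ R * (∑ i, ∑ j, |Q i j|) * dist p q := by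
  have hrow : ∀ i, |(Q *ᵥ u) i / u i| ≤ R * ∑ j, |Q i j| := fun i => by
    rw [abs_div, abs_of_pos (hu i), div_le_iff₀ (hu i), mul_sum, sum_mul]
    refine (abs_sum_le_sum_abs _ _).trans (sum_le_sum fun j _ => ?_)
    rw [abs_mul, abs_of_pos (hu j)]
    nlinarith [hR i j, abs_nonneg (Q i j)]
  calc |dvObjective Q u p - dvObjective Q u q|
      = |∑ i, (Q *ᵥ u) i / u i * (q i - p i)| := by
        simp only [dvObjective, mul_sub, sum_sub_distrib]; ring_nf
    _ ≤ ∑ i, R * (∑ j, |Q i j|) * dist p q := by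
        refine (abs_sum_le_sum_abs _ _).trans (sum_le_sum fun i _ => ?_)
        rw [abs_mul, ← Real.dist_eq, dist_comm]
        exact mul_le_mul (hrow i) (dist_le_pi_dist p q i) dist_nonneg
          ((abs_nonneg _).trans (hrow i))
    _ = R * (∑ i, ∑ j, |Q i j|) * dist p q := by rw [← sum_mul, ← mul_sum]

lemma dvObjective_sub_le_dvObjective_add_const (hQ : ∀ i j, i ≠ j → 0 ≤ Q i j)
    (hQrow : ∀ i, ∑ j, Q i j = 0) (hu : ∀ i, 0 < u i) (hp : ∀ i, 0 ≤ p i) {t m A : ℝ}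
    (ht : 0 ≤ t) (hm : 0 ≤ m) (hA : ∀ i, p i * m ≤ A * u i) :
    dvObjective Q u p - (∑ i, |Q i i|) * A * t ≤ dvObjective Q (fun j => u j + t * m) p := by
  suffices ∀ i, (Q *ᵥ u) i / (u i + t * m) * p i ≤ (Q *ᵥ u) i / u i * p i + |Q i i| * A * t by
    have := sum_le_sum fun i (_ : i ∈ univ) => this i
    rw [sum_add_distrib, ← sum_mul, ← sum_mul] at this
    rw [dvObjective, dvObjective, mulVec_add_const hQrow]
    linarith
  intro i
  have hx : -|Q i i| * u i ≤ (Q *ᵥ u) i := by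
    have := diag_le_mulVec_div hQ hu i
    rw [le_div_iff₀ (hu i)] at this
    nlinarith [neg_abs_le (Q i i), hu i]
  have hui := hu i
  have htm : 0 ≤ t * m := mul_nonneg ht hm
  -- `x / a - x / (a + t m) = x t m / (a (a + t m))`, with `-x ≤ |Q i i| a` and `p m ≤ A a`
  rw [div_mul_eq_mul_div, div_mul_eq_mul_div, div_add' _ _ _ hui.ne',
    div_le_div_iff₀ (by positivity) hui]
  have hA0 : 0 ≤ A := nonneg_of_mul_nonneg_left ((mul_nonneg (hp i) hm).trans (hA i)) hui
  nlinarith [mul_le_mul_of_nonneg_right hx (mul_nonneg (hp i) htm),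
    mul_le_mul_of_nonneg_left (hA i) (mul_nonneg (mul_nonneg (abs_nonneg (Q i i)) ht) hui.le),
    mul_nonneg (mul_nonneg (mul_nonneg (abs_nonneg (Q i i)) hA0) ht) (mul_nonneg hui.le htm)]

lemma mul_mul_le_of_neg_one_le_dvObjective (hQ : ∀ i j, i ≠ j → 0 ≤ Q i j)
    (hu : ∀ i, 0 < u i) (hp : p ∈ stdSimplex ℝ ι) (h : -1 ≤ dvObjective Q u p) {i j : ι}
    (hij : i ≠ j) : p i * Q i j * u j ≤ (∑ k, |Q k k| + 1) * u i := by
  classical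
  have hterm : ∀ k, 0 ≤ |Q k k| + (Q *ᵥ u) k / u k * p k := fun k => by
    linarith [neg_abs_diag_le_mulVec_div_mul hQ hu (mem_Icc_of_mem_stdSimplex hp k)]
  have hi : |Q i i| + (Q *ᵥ u) i / u i * p i ≤ ∑ k, |Q k k| + 1 := by
    have := single_le_sum (fun k _ => hterm k) (mem_univ i)
    rw [sum_add_distrib] at this
    rw [dvObjective] at h
    linarith
  have hpair : Q i i * u i + Q i j * u j ≤ (Q *ᵥ u) i := by
    simpa [sum_pair hij] using
      sum_mul_le_mulVec hQ (fun k => (hu k).le) (mem_insert_self i {j})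
  have hpi := mem_Icc_of_mem_stdSimplex hp i
  rw [div_mul_eq_mul_div, ← le_sub_iff_add_le', div_le_iff₀ (hu i)] at hi
  nlinarith [mul_le_mul_of_nonneg_left hpair hpi.1,
    mul_le_mul_of_nonneg_right (neg_le_abs (Q i i)) (mul_nonneg hpi.1 (hu i).le),
    mul_nonneg (mul_nonneg (abs_nonneg (Q i i)) (hu i).le) (sub_nonneg.2 hpi.2)]

lemma exists_mul_sum_le_of_neg_one_le_dvObjective (hQpos : ∀ i j, i ≠ j → 0 < Q i j) :
    ∃ A, ∀ u : ι → ℝ, (∀ i, 0 < u i) → ∀ p ∈ stdSimplex ℝ ι, -1 ≤ dvObjective Q u p →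
      ∀ i, p i * ∑ j, u j ≤ A * u i := by
  classical
  have hsmall : ∀ᶠ κ in 𝓝 (0 : ℝ), κ ≤ 1 ∧ ∀ i j, i ≠ j → κ ≤ Q i j :=
    (eventually_le_nhds one_pos).and <| eventually_all.2 fun i => eventually_all.2 fun j =>
      if h : i = j then .of_forall fun _ hij => absurd h hij
      else (eventually_le_nhds (hQpos i j h)).mono fun _ hκ _ => hκ
  obtain ⟨κ, ⟨hκ1, hκQ⟩, hκ0 : 0 < κ⟩ :=
    ((hsmall.filter_mono nhdsWithin_le_nhds).and self_mem_nhdsWithin).exists (f := 𝓝[>] 0)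
  set B := (∑ k, |Q k k| + 1) / κ
  have hB : 1 ≤ B := by
    rw [le_div_iff₀ hκ0]
    linarith [sum_nonneg fun k (_ : k ∈ univ) => abs_nonneg (Q k k)]
  refine ⟨Fintype.card ι * B, fun u hu p hp h i => ?_⟩
  have hpi := mem_Icc_of_mem_stdSimplex hp i
  have hj : ∀ j, p i * u j ≤ B * u i := fun j => by
    rcases eq_or_ne i j with rfl | hij
    · nlinarith [mul_le_mul_of_nonneg_right hpi.2 (hu i).le,
        mul_le_mul_of_nonneg_right hB (hu i).le]
    · rw [div_mul_eq_mul_div, le_div_iff₀ hκ0]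
      nlinarith [mul_mul_le_of_neg_one_le_dvObjective (hQpos · · · |>.le) hu hp h hij,
        mul_le_mul_of_nonneg_left (hκQ i j hij) (mul_nonneg hpi.1 (hu j).le)]
  calc p i * ∑ j, u j ≤ ∑ _j : ι, B * u i := by rw [mul_sum]; exact sum_le_sum fun j _ => hj j
    _ = Fintype.card ι * B * u i := by simp [mul_assoc]

lemma exists_balanced_lt_dvObjective (hQpos : ∀ i j, i ≠ j → 0 < Q i j)
    (hQrow : ∀ i, ∑ j, Q i j = 0) {ε : ℝ} (hε : 0 < ε) :
    ∃ R, 0 ≤ R ∧ ∀ p ∈ stdSimplex ℝ ι, ∃ u : ι → ℝ, (∀ i, 0 < u i) ∧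
      (∀ i j, u j ≤ R * u i) ∧ dvRate Q p - ε < dvObjective Q u p := by
  have hQ : ∀ i j, i ≠ j → 0 ≤ Q i j := fun i j h => (hQpos i j h).le
  obtain ⟨A, hA⟩ := exists_mul_sum_le_of_neg_one_le_dvObjective hQpos
  obtain ⟨t, ht, htε⟩ := exists_pos_mul_lt (half_pos hε) ((∑ i, |Q i i|) * A)
  refine ⟨1 + 1 / t, by positivity, fun p hp => ?_⟩
  obtain ⟨⟨u, hu⟩, hnear⟩ := exists_lt_of_lt_ciSup
    (sub_lt_self (dvRate Q p) (lt_min one_pos (half_pos hε)))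
  have hnear' : -1 ≤ dvObjective Q u p := by
    linarith [dvRate_nonneg hQ hQrow hp, min_le_left 1 (ε / 2)]
  set m := ∑ j, u j
  have hm : 0 ≤ m := sum_nonneg fun j _ => (hu j).le
  -- shifting `u` by a small multiple of its total mass bounds all ratios `u j / u i`
  refine ⟨fun j => u j + t * m, fun i => add_pos_of_pos_of_nonneg (hu i) (mul_nonneg ht.le hm),
    fun i j => ?_, ?_⟩
  · have hjm : u j ≤ m := single_le_sum (fun k _ => (hu k).le) (mem_univ j)
    have : (1 + 1 / t) * (u i + t * m) = u i + t * m + u i / t + m := by field_simp; ring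
    rw [this]
    linarith [div_nonneg (hu i).le ht.le, hu i]
  · have := dvObjective_sub_le_dvObjective_add_const hQ hQrow hu hp.1 ht.le hm
      (hA u hu p hp hnear')
    linarith [min_le_right 1 (ε / 2)]

lemma exists_dvRate_le_add_dist (hQpos : ∀ i j, i ≠ j → 0 < Q i j)
    (hQrow : ∀ i, ∑ j, Q i j = 0) {ε : ℝ} (hε : 0 < ε) :
    ∃ L, 0 ≤ L ∧ ∀ p ∈ stdSimplex ℝ ι, ∀ q ∈ stdSimplex ℝ ι,
      dvRate Q p ≤ dvRate Q q + ε + L * dist p q := by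
  obtain ⟨R, hR, hnear⟩ := exists_balanced_lt_dvObjective hQpos hQrow hε
  refine ⟨R * ∑ i, ∑ j, |Q i j|, by positivity, fun p hp q hq => ?_⟩
  obtain ⟨u, hu, hbal, hlt⟩ := hnear p hp
  have hlip := (abs_le.1 (abs_dvObjective_sub_le (Q := Q) hu hbal p q)).2
  have hq' : dvObjective Q u q ≤ dvRate Q q :=
    le_ciSup (bddAbove_dvObjective (hQpos · · · |>.le) hq) ⟨u, hu⟩
  linarith

theorem continuousOn_dvRate (hQpos : ∀ i j, i ≠ j → 0 < Q i j)
    (hQrow : ∀ i, ∑ j, Q i j = 0) : ContinuousOn (dvRate Q) (stdSimplex ℝ ι) := by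
  refine Metric.continuousOn_iff.2 fun q hq ε hε => ?_
  obtain ⟨L, hL, hle⟩ := exists_dvRate_le_add_dist hQpos hQrow (half_pos hε)
  refine ⟨ε / 2 / (L + 1), by positivity, fun p hp hpq => ?_⟩
  have hLd : L * dist p q < ε / 2 := by
    rw [lt_div_iff₀ (by positivity)] at hpq
    nlinarith [dist_nonneg (x := p) (y := q)]
  have hqp := hle q hq p hp
  rw [dist_comm] at hqp
  rw [Real.dist_eq, abs_lt]
  constructor <;> linarith [hle p hp q hq]

end DonskerVaradhan

theorem tendsto_integral_comp_of_continuousOn {α E : Type*} [MeasurableSpace α]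
    {μ : Measure α} [IsFiniteMeasure μ] [TopologicalSpace E] [MeasurableSpace E]
    [OpensMeasurableSpace E] {g : E → ℝ} {s : Set E} (hg : ContinuousOn g s)
    (hs : MeasurableSet s) {C : ℝ} (hC : ∀ x ∈ s, |g x| ≤ C) {F : ℕ → α → E} {f : α → E}
    (hF : ∀ n, AEMeasurable (F n) μ) (hFs : ∀ n, ∀ᵐ a ∂μ, F n a ∈ s) (hfs : ∀ᵐ a ∂μ, f a ∈ s)
    (hlim : ∀ᵐ a ∂μ, Tendsto (fun n => F n a) atTop (𝓝 (f a))) :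
    Tendsto (fun n => ∫ a, g (F n a) ∂μ) atTop (𝓝 (∫ a, g (f a) ∂μ)) := by
  refine tendsto_integral_of_dominated_convergence (fun _ => C) (fun n => ?_)
    (integrable_const C) (fun n => (hFs n).mono fun a ha => hC _ ha) ?_
  · have hmap : (μ.map (F n)).restrict s = μ.map (F n) :=
      Measure.restrict_eq_self_of_ae_mem ((ae_map_iff (hF n) hs).2 (hFs n))
    exact (hmap ▸ hg.aestronglyMeasurable hs).comp_aemeasurable (hF n)
  · filter_upwards [hlim, hfs, ae_all_iff.2 hFs] with a ha hfa hFa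
    exact (hg _ hfa).tendsto.comp (tendsto_nhdsWithin_iff.2 ⟨ha, .of_forall hFa⟩)

lemma IsMKernel.measurable {d : ℕ} {T : ℝ} {K : ℝ → Fin d → ℝ} (hK : IsMKernel d T K) :
    Measurable K :=
  measurable_pi_iff.2 hK.1

lemma IsMKernel.ae_mem_stdSimplex {d : ℕ} {T : ℝ} {K : ℝ → Fin d → ℝ} (hK : IsMKernel d T K) :
    ∀ᵐ s ∂volume.restrict (Set.Ioc 0 T), K s ∈ stdSimplex ℝ (Fin d) :=
  (ae_restrict_mem measurableSet_Ioc).mono fun s hs => hK.2 s (Set.Ioc_subset_Icc_self hs)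

lemma Itilde_eq_setIntegral_dvRate {d : ℕ} {T : ℝ} (hT : 0 ≤ T) (Q : Matrix (Fin d) (Fin d) ℝ)
    (K : ℝ → Fin d → ℝ) : Itilde d T Q K = ∫ s in Set.Ioc 0 T, dvRate Q (K s) :=
  intervalIntegral.integral_of_le hT

theorem Itilde_continuous (d : ℕ) (T : ℝ) (hT : 0 < T)
    (Q : Matrix (Fin d) (Fin d) ℝ)
    (hQpos : ∀ i j : Fin d, i ≠ j → 0 < Q i j)
    (hQrow : ∀ i : Fin d, ∑ j : Fin d, Q i j = 0)
    (K : ℝ → Fin d → ℝ) (Kn : ℕ → ℝ → Fin d → ℝ)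
    (hK : IsMKernel d T K) (hKn : ∀ n : ℕ, IsMKernel d T (Kn n))
    (hconv : ∀ i : Fin d,
      ∀ᵐ s ∂(volume.restrict (Set.Icc (0:ℝ) T)),
        Tendsto (fun n => Kn n s i) atTop (𝓝 (K s i))) :
    Tendsto (fun n => Itilde d T Q (Kn n)) atTop (𝓝 (Itilde d T Q K)) := by
  have hlim : ∀ᵐ s ∂volume.restrict (Set.Ioc 0 T), Tendsto (fun n => Kn n s) atTop (𝓝 (K s)) :=
    ae_restrict_of_ae_restrict_of_subset Set.Ioc_subset_Icc_self <|
      (ae_all_iff.2 hconv).mono fun s hs => tendsto_pi_nhds.2 hs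
  simp only [Itilde_eq_setIntegral_dvRate hT.le]
  exact tendsto_integral_comp_of_continuousOn (continuousOn_dvRate hQpos hQrow)
    (isClosed_stdSimplex ℝ (Fin d)).measurableSet
    (fun p hp => abs_dvRate_le (hQpos · · · |>.le) hQrow hp)
    (fun n => (hKn n).measurable.aemeasurable) (fun n => (hKn n).ae_mem_stdSimplex)
    hK.ae_mem_stdSimplex hlim
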